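/- arXiv:1802.08070 — 5 statements merged into one kernel-verified Lean document; each statement's English description precedes it below -/
import Mathlib

section
/- Let T be a monad on a category C and H an endofunctor on C that preserves non-empty monomorphisms (monos whose domain is not a strict initial object). Then every lifting H^T of H to the Eilenberg-Moore category C^T preserves non-empty monomorphisms. -/
open CategoryTheory CategoryTheory.Limits

universe v u

namespace LFF

variable {C : Type u} [Category.{v} C]

/-- An object is finitely presentable if its hom-functor preserves filtered colimits. -/
def IsFP (X : C) : Prop :=
  ∀ (J : Type v) [SmallCategory J] [IsFiltered J] (F : J ⥤ C)
    (c : Cocone F), Nonempty (IsColimit c) →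
    Nonempty (IsColimit ((coyoneda.obj (Opposite.op X)).mapCocone c))

/-- An object is finitely generated if its hom-functor preserves filtered colimits
of diagrams all of whose connecting morphisms are monomorphisms. -/
def IsFG (X : C) : Prop :=
  ∀ (J : Type v) [SmallCategory J] [IsFiltered J] (F : J ⥤ C),
    (∀ ⦃i j : J⦄ (f : i ⟶ j), Mono (F.map f)) →
    ∀ (c : Cocone F), Nonempty (IsColimit c) →
    Nonempty (IsColimit ((coyoneda.obj (Opposite.op X)).mapCocone c))

/-- A category is locally finitely presentable if it is cocomplete, the finitely
presentable objects are essentially small, and every object is a filtered colimit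
of finitely presentable objects. -/
def IsLFP (C : Type u) [Category.{v} C] : Prop :=
  HasColimits C ∧
  EssentiallySmall.{v} (ObjectProperty.FullSubcategory (fun X : C => IsFP X)) ∧
  ∀ X : C, ∃ (J : Type v) (_ : SmallCategory J) (_ : IsFiltered J)
    (F : J ⥤ C) (c : Cocone F),
      (∀ j, IsFP (F.obj j)) ∧ Nonempty (IsColimit c) ∧ Nonempty (c.pt ≅ X)

/-- A functor is finitary if it preserves filtered colimits. -/
def IsFinitary (H : C ⥤ C) : Prop :=
  ∀ (J : Type v) [SmallCategory J] [IsFiltered J], Nonempty (PreservesColimitsOfShape J H)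

/-- An object is a strict initial object if it is initial and every morphism into it
is an isomorphism. -/
def IsStrictInitial (X : C) : Prop :=
  Nonempty (IsInitial X) ∧ ∀ (Y : C) (f : Y ⟶ X), IsIso f

/-- A monomorphism is non-empty if its domain is not a strict initial object;
a functor preserves non-empty monos if it maps them to monos. -/
def PreservesNonemptyMonos (H : C ⥤ C) : Prop :=
  ∀ ⦃X Y : C⦄ (m : X ⟶ Y), Mono m → ¬ IsStrictInitial X → Mono (H.map m)

/-- A coalgebra is locally finitely generated (lfg) if every morphism from a finitely
generated object into its carrier factors through a coalgebra homomorphism from a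
coalgebra with finitely generated carrier. -/
def IsLFGCoalgebra (H : C ⥤ C) (X : Endofunctor.Coalgebra H) : Prop :=
  ∀ (S : C), IsFG S → ∀ f : S ⟶ X.V,
    ∃ (P : Endofunctor.Coalgebra H) (h : P ⟶ X) (f' : S ⟶ P.V),
      IsFG P.V ∧ f' ≫ h.f = f

/-- An algebra is fg-iterative if every flat equation morphism `e : X ⟶ HX + A` with
`X` finitely generated has a unique solution. -/
def IsFGIterative [HasBinaryCoproducts C] (H : C ⥤ C) (A : Endofunctor.Algebra H) : Prop :=
  ∀ (X : C), IsFG X → ∀ e : X ⟶ (H.obj X ⨿ A.a),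
    ∃! s : X ⟶ A.a,
      s = e ≫ coprod.map (H.map s) (𝟙 A.a) ≫ coprod.desc A.str (𝟙 A.a)

end LFF

/-!
An algebra whose carrier is strict initial is itself strict initial: its structure map
`T X.A ⟶ X.A` is an iso, so `T X.A` is initial as well and every map out of `X.A` is an algebra
map; strictness is reflected by the conservative forgetful functor. Hence a non-empty mono of
algebras has a non-empty underlying mono, `H` sends it to a mono, and along the lifting square
the faithful forgetful functor reflects this back to `Hl`.
-/

namespace LFF

variable {C : Type u} [Category.{v} C]

theorem isInitial_algebra_of_isStrictInitial_carrier {T : Monad C} {X : T.Algebra}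
    (hX : IsStrictInitial X.A) : Nonempty (IsInitial X) := by
  obtain ⟨⟨hI⟩, hstrict⟩ := hX
  have : IsIso X.a := hstrict _ X.a
  have hTX : IsInitial ((T : C ⥤ C).obj X.A) := hI.ofIso (asIso X.a).symm
  refine ⟨IsInitial.ofUniqueHom (fun B => ⟨hI.to B.A, hTX.hom_ext _ _⟩) fun B g => ?_⟩
  exact Monad.Algebra.Hom.ext (hI.hom_ext _ _)

theorem isStrictInitial_algebra_of_isStrictInitial_carrier {T : Monad C} {X : T.Algebra}
    (hX : IsStrictInitial X.A) : IsStrictInitial X := by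
  refine ⟨isInitial_algebra_of_isStrictInitial_carrier hX, fun B g => ?_⟩
  have : IsIso ((Monad.forget T).map g) := hX.2 _ g.f
  exact isIso_of_reflects_iso g (Monad.forget T)

theorem mono_map_of_lift {D : Type*} [Category D] {F : D ⥤ C} [F.Faithful] {H : C ⥤ C}
    {Hl : D ⥤ D} (e : Hl ⋙ F ≅ F ⋙ H) {X Y : D} (m : X ⟶ Y) [Mono (H.map (F.map m))] :
    Mono (Hl.map m) := by
  have : Mono ((F ⋙ H).map m) := inferInstanceAs (Mono (H.map (F.map m)))
  have : Mono ((Hl ⋙ F).map m) := by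
    rw [← NatIso.naturality_2 e m]
    exact mono_comp _ _
  exact F.mono_of_mono_map this

end LFF

open LFF in
/-- Any lifting of a functor preserving non-empty monos to the Eilenberg-Moore category
preserves non-empty monos. -/
theorem stmt2 {C : Type u} [Category.{v} C] (T : Monad C) (H : C ⥤ C)
    (hH : PreservesNonemptyMonos H) (Hl : T.Algebra ⥤ T.Algebra)
    (hlift : Hl ⋙ T.forget = T.forget ⋙ H) :
    PreservesNonemptyMonos Hl := by
  intro X Y m hm hX
  have hXA : ¬ IsStrictInitial X.A := mt isStrictInitial_algebra_of_isStrictInitial_carrier hX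
  have : Mono (H.map (T.forget.map m)) := hH _ (T.forget.map_mono m) hXA
  exact mono_map_of_lift (eqToIso hlift) m
end

section
/- If a monad algebra (A, a : TA → A) for a monad T has carrier A that is a strict initial object of C, then (A, a) is a strict initial object of the Eilenberg-Moore category C^T. -/
open CategoryTheory CategoryTheory.Limits

universe v u

namespace LFF

variable {C : Type u} [Category.{v} C]

theorem IsStrictInitial.of_reflectsIsomorphisms {D : Type*} [Category D] (F : D ⥤ C)
    [F.ReflectsIsomorphisms] {X : D} (hX : IsInitial X)
    (hFX : ∀ (Y : C) (f : Y ⟶ F.obj X), IsIso f) : IsStrictInitial X :=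
  ⟨⟨hX⟩, fun _ f => haveI := hFX _ (F.map f); isIso_of_reflects_iso f F⟩

end LFF

namespace CategoryTheory.Monad.Algebra

/-- Both sides of the square making `hA.to B.A` an algebra morphism start at `T A ≅ A`,
hence agree. -/
def isInitialOfIsInitialCarrier {C : Type u} [Category.{v} C] {T : Monad C} {A : T.Algebra}
    (hA : IsInitial A.A) [IsIso A.a] : IsInitial A :=
  IsInitial.ofUniqueHom (fun B => ⟨hA.to B.A, (hA.ofIso (asIso A.a).symm).hom_ext _ _⟩)
    (fun _ _ => Hom.ext (hA.hom_ext _ _))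

end CategoryTheory.Monad.Algebra

open LFF in
/-- If the carrier of a monad algebra is a strict initial object of `C`, then the
algebra is a strict initial object of the Eilenberg-Moore category. -/
theorem stmt3 {C : Type u} [Category.{v} C] (T : Monad C) (A : T.Algebra)
    (h : IsStrictInitial A.A) :
    IsStrictInitial (C := T.Algebra) A := by
  obtain ⟨⟨hA⟩, hstrict⟩ := h
  have : IsIso A.a := hstrict _ A.a
  exact IsStrictInitial.of_reflectsIsomorphisms T.forget
    (Monad.Algebra.isInitialOfIsInitialCarrier hA) hstrict
end

section
/- Let C be a category with (strong epi, mono)-factorizations and H : C → C an endofunctor preserving non-empty monomorphisms. Then every coalgebra homomorphism h : (C,c) → (D,d) factors in Coalg H as a strong-epi-carried homomorphism followed by a mono-carried homomorphism; i.e., the image object I of h in C carries a unique coalgebra structure making both parts of the factorization into coalgebra homomorphisms. -/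
open CategoryTheory CategoryTheory.Limits

universe v u

namespace LFF

variable {C : Type u} [Category.{v} C]

/-- If the mono is empty, its domain is strict initial, which forces the strong epi to be an iso. -/
theorem hasLiftingProperty_map_of_preservesNonemptyMonos {H : C ⥤ C}
    (hH : PreservesNonemptyMonos H) {X Y Z : C} (e : X ⟶ Y) [StrongEpi e] (m : Y ⟶ Z) [Mono m] :
    HasLiftingProperty e (H.map m) := by
  by_cases hY : IsStrictInitial Y
  · have : IsIso e := hY.2 X e
    infer_instance
  · have : Mono (H.map m) := hH m inferInstance hY
    infer_instance

theorem existsUnique_coalgebra_str_of_fac {H : C ⥤ C} {A B : Endofunctor.Coalgebra H}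
    (h : A ⟶ B) {I : C} (e : A.V ⟶ I) (m : I ⟶ B.V) (fac : e ≫ m = h.f) [Epi e]
    [HasLiftingProperty e (H.map m)] :
    ∃! i : I ⟶ H.obj I, A.str ≫ H.map e = e ≫ i ∧ i ≫ H.map m = m ≫ B.str := by
  have sq : CommSq (A.str ≫ H.map e) e (H.map m) (m ≫ B.str) :=
    ⟨by rw [Category.assoc, ← H.map_comp, fac, h.h, ← fac, Category.assoc]⟩
  exact ⟨sq.lift, ⟨sq.fac_left.symm, sq.fac_right⟩,
    fun i hi => by rw [← cancel_epi e, ← hi.1, sq.fac_left]⟩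

end LFF

open LFF in
/-- (Strong epi, mono)-factorizations lift from `C` to coalgebras: every coalgebra
homomorphism factors as a strong-epi-carried homomorphism followed by a mono-carried one,
via a unique coalgebra structure on the image. -/
theorem stmt4 {C : Type u} [Category.{v} C] [HasStrongEpiMonoFactorisations C]
    (H : C ⥤ C) (hH : PreservesNonemptyMonos H)
    (A B : Endofunctor.Coalgebra H) (h : A ⟶ B) :
    ∃ (I : C) (e : A.V ⟶ I) (m : I ⟶ B.V), StrongEpi e ∧ Mono m ∧ e ≫ m = h.f ∧
      ∃! i : I ⟶ H.obj I,
        A.str ≫ H.map e = e ≫ i ∧ i ≫ H.map m = m ≫ B.str := by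
  obtain ⟨F⟩ := HasStrongEpiMonoFactorisations.has_fac h.f
  have := F.e_strong_epi
  have := F.m_mono
  have := hasLiftingProperty_map_of_preservesNonemptyMonos hH F.e F.m
  exact ⟨F.I, F.e, F.m, F.e_strong_epi, F.m_mono, F.fac,
    existsUnique_coalgebra_str_of_fac h F.e F.m F.fac⟩
end

section
/- A coalgebra (X, x : X → HX) is lfg if and only if for every finitely generated subobject f : S ↣ X there exist a mono-carried subcoalgebra h : (P,p) ↣ (X,x) with P finitely generated and a monomorphism f' : S ↣ P such that h ∘ f' = f. -/
open CategoryTheory CategoryTheory.Limits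

universe v u

/-! Factor a homomorphism `h : (P, p) ⟶ (X, x)` with `P` fg as `e ≫ m`, with `m` mono and `e`
lifting against all monos. Then `M` is fg: colimit injections of filtered diagrams of monos are
mono in an lfp category, so maps out of `M` into such a colimit lift along them from maps out
of `P`. As `H m` is mono (unless `M` is strict initial, hence trivially a coalgebra), the
diagonal of the square `p ≫ H e`, `m ≫ x` is a coalgebra structure on `M` making `m` a
homomorphism. The factorization is built by coequalizing, ω times, all pairs of maps out of a
set of representatives of the fp objects that the current map to the codomain identifies. -/

namespace LFF

variable {C : Type u} [Category.{v} C]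

section FilteredColimits

variable {J : Type v} [SmallCategory J] [IsFiltered J] {F : J ⥤ C} {c : Cocone F} {T : C}

lemma IsFP.exists_factor (hT : IsFP T) (hc : IsColimit c) (u : T ⟶ c.pt) :
    ∃ (j : J) (t : T ⟶ F.obj j), t ≫ c.ι.app j = u :=
  Types.jointly_surjective _ (hT J F c ⟨hc⟩).some u

lemma IsFP.exists_map_eq (hT : IsFP T) (hc : IsColimit c) {j : J} (a b : T ⟶ F.obj j)
    (h : a ≫ c.ι.app j = b ≫ c.ι.app j) : ∃ (k : J) (α : j ⟶ k), a ≫ F.map α = b ≫ F.map α :=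
  (Types.FilteredColimit.isColimit_eq_iff' (hT J F c ⟨hc⟩).some a b).1 h

lemma IsFG.exists_factor (hT : IsFG T) (hF : ∀ ⦃i j : J⦄ (f : i ⟶ j), Mono (F.map f))
    (hc : IsColimit c) (u : T ⟶ c.pt) : ∃ (j : J) (t : T ⟶ F.obj j), t ≫ c.ι.app j = u :=
  Types.jointly_surjective _ (hT J F hF c ⟨hc⟩).some u

end FilteredColimits

lemma IsFP.exists_factor_of_nat {T : C} (hT : IsFP T) {F : ℕ ⥤ C} {c : Cocone F}
    (hc : IsColimit c) (u : T ⟶ c.pt) : ∃ (n : ℕ) (t : T ⟶ F.obj n), t ≫ c.ι.app n = u := by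
  let E := (ULiftHomULiftCategory.equiv.{v, v} ℕ).symm
  obtain ⟨j, t, ht⟩ := hT.exists_factor (hc.whiskerEquivalence E) u
  exact ⟨E.functor.obj j, t, ht⟩

lemma IsFP.exists_factor₂_of_nat {T : C} (hT : IsFP T) {F : ℕ ⥤ C} {c : Cocone F}
    (hc : IsColimit c) (a b : T ⟶ c.pt) :
    ∃ (n : ℕ) (a' b' : T ⟶ F.obj n), a' ≫ c.ι.app n = a ∧ b' ≫ c.ι.app n = b := by
  obtain ⟨n₁, a₁, rfl⟩ := hT.exists_factor_of_nat hc a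
  obtain ⟨n₂, b₁, rfl⟩ := hT.exists_factor_of_nat hc b
  exact ⟨max n₁ n₂, a₁ ≫ F.map (homOfLE (le_max_left _ _)),
    b₁ ≫ F.map (homOfLE (le_max_right _ _)), by simp, by simp⟩

lemma IsLFP.isSeparating (hC : IsLFP C) : ObjectProperty.IsSeparating (fun X : C => IsFP X) := by
  intro U V f g hfg
  obtain ⟨J, _, _, F, c, hfp, ⟨hc⟩, ⟨iso⟩⟩ := hC.2.2 U
  refine (cancel_epi iso.hom).1 (hc.hom_ext fun j => ?_)
  simpa only [Category.assoc] using hfg _ (hfp j) (c.ι.app j ≫ iso.hom)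

lemma IsLFP.exists_family_isFP (hC : IsLFP C) :
    ∃ (ι : Type v) (G : ι → C), ∀ T, IsFP T → ∃ i, Nonempty (G i ≅ T) := by
  have := hC.2.1
  let ε := equivSmallModel.{v} (ObjectProperty.FullSubcategory fun X : C => IsFP X)
  exact ⟨_, fun s => (ε.inverse.obj s).obj, fun T hT =>
    ⟨ε.functor.obj ⟨T, hT⟩, ⟨(ObjectProperty.ι _).mapIso (ε.unitIso.symm.app ⟨T, hT⟩)⟩⟩⟩

lemma IsLFP.mono_ι (hC : IsLFP C) {J : Type v} [SmallCategory J] [IsFiltered J] {F : J ⥤ C}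
    (hF : ∀ ⦃i j : J⦄ (f : i ⟶ j), Mono (F.map f)) {c : Cocone F} (hc : IsColimit c) (j : J) :
    Mono (c.ι.app j) := by
  refine (hC.isSeparating.mono_iff _).2 fun T hT a b hab => ?_
  obtain ⟨k, α, hα⟩ := hT.exists_map_eq hc a b hab
  exact (cancel_mono (F.map α)).1 hα

lemma IsFG.of_llp (hC : IsLFP C) {A M : C} (hA : IsFG A) {e : A ⟶ M}
    (he : (MorphismProperty.monomorphisms C).llp e) : IsFG M := by
  intro J _ _ F hF c ⟨hc⟩
  refine ⟨Types.FilteredColimit.isColimitOf' _ _ (fun u => ?_) (fun j a b hab => ?_)⟩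
  · obtain ⟨j, t, ht⟩ := hA.exists_factor hF hc (e ≫ u)
    have := hC.mono_ι hF hc j
    have := he (c.ι.app j) (MorphismProperty.monomorphisms.infer_property _)
    let sq : CommSq t e (c.ι.app j) u := ⟨ht⟩
    exact ⟨j, sq.lift, sq.fac_right.symm⟩
  · have := hC.mono_ι hF hc j
    exact ⟨j, 𝟙 j, by simpa using (cancel_mono (c.ι.app j)).1 hab⟩

section Collapse

variable [HasColimits C] {ι : Type v} (G : ι → C)

instance hasColimitsOfShape_nat : HasColimitsOfShape ℕ C :=
  hasColimitsOfShape_of_equivalence (ULiftHomULiftCategory.equiv.{v, v} ℕ).symm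

section

variable {M B : C} (m : M ⟶ B)

def CollapsedPair : Type v :=
  {p : Σ i, (G i ⟶ M) × (G i ⟶ M) // p.2.1 ≫ m = p.2.2 ≫ m}

noncomputable def collapseFst : (∐ fun p : CollapsedPair G m => G p.1.1) ⟶ M :=
  Sigma.desc fun p => p.1.2.1

noncomputable def collapseSnd : (∐ fun p : CollapsedPair G m => G p.1.1) ⟶ M :=
  Sigma.desc fun p => p.1.2.2

lemma collapseFst_comp_eq : collapseFst G m ≫ m = collapseSnd G m ≫ m :=
  Sigma.hom_ext _ _ fun p => by simpa [collapseFst, collapseSnd] using p.2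

noncomputable abbrev collapse : M ⟶ coequalizer (collapseFst G m) (collapseSnd G m) :=
  coequalizer.π _ _

noncomputable abbrev collapseLift : coequalizer (collapseFst G m) (collapseSnd G m) ⟶ B :=
  coequalizer.desc m (collapseFst_comp_eq G m)

lemma collapse_comp_collapseLift : collapse G m ≫ collapseLift G m = m :=
  coequalizer.π_desc _ _

lemma collapse_eq {i : ι} (a b : G i ⟶ M) (h : a ≫ m = b ≫ m) :
    a ≫ collapse G m = b ≫ collapse G m := by
  have hp := Sigma.ι (fun p : CollapsedPair G m => G p.1.1) ⟨⟨i, a, b⟩, h⟩ ≫=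
    coequalizer.condition (collapseFst G m) (collapseSnd G m)
  simpa [collapseFst, collapseSnd, collapse] using hp

lemma llp_collapse :
    (MorphismProperty.monomorphisms C).llp (collapse G m) := fun _ _ p (_ : Mono p) =>
  StrongEpi.llp p

end

variable {A B : C} (g : A ⟶ B)

-- A single collapse need not make the map to `B` mono, since maps from fp objects into the
-- quotient need not lift along it; in the colimit they factor through a finite stage.
noncomputable def collapseSeq : ℕ → Σ M : C, M ⟶ B
  | 0 => ⟨A, g⟩
  | n + 1 => ⟨_, collapseLift G (collapseSeq n).2⟩

noncomputable def collapseChain : ℕ ⥤ C :=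
  Functor.ofSequence fun n => collapse G (collapseSeq G g n).2

lemma collapseChain_map_succ (n : ℕ) :
    (collapseChain G g).map (homOfLE (n.le_add_right 1)) = collapse G (collapseSeq G g n).2 :=
  Functor.ofSequence_map_homOfLE_succ _ n

noncomputable def collapseCocone : Cocone (collapseChain G g) where
  pt := B
  ι := NatTrans.ofSequence (fun n => (collapseSeq G g n).2) fun n => by
    rw [collapseChain_map_succ]
    exact (collapse_comp_collapseLift G _).trans (Category.comp_id _).symm

lemma comp_collapseChain_map_succ_eq (n : ℕ) {i : ι} (a b : G i ⟶ (collapseChain G g).obj n)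
    (h : a ≫ (collapseCocone G g).ι.app n = b ≫ (collapseCocone G g).ι.app n) :
    a ≫ (collapseChain G g).map (homOfLE (n.le_add_right 1)) =
      b ≫ (collapseChain G g).map (homOfLE (n.le_add_right 1)) := by
  rw [collapseChain_map_succ]
  exact collapse_eq G _ a b h

lemma llp_collapseChain_ι_zero :
    (MorphismProperty.monomorphisms C).llp (colimit.ι (collapseChain G g) 0) := by
  let h : (MorphismProperty.monomorphisms C).llp.TransfiniteCompositionOfShape ℕ
      (colimit.ι (collapseChain G g) 0) :=
    { F := collapseChain G g
      isoBot := Iso.refl _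
      incl := (colimit.cocone _).ι
      isColimit := colimit.isColimit _
      map_mem := fun n _ => by
        have e : (collapseChain G g).map (homOfLE (Order.le_succ n)) =
            collapse G (collapseSeq G g n).2 := collapseChain_map_succ G g n
        rw [e]
        exact llp_collapse G _ }
  exact MorphismProperty.transfiniteCompositionsOfShape_le _ ℕ _ h.mem

lemma mono_desc_collapseCocone (hC : IsLFP C) (hG : ∀ T, IsFP T → ∃ i, Nonempty (G i ≅ T)) :
    Mono (colimit.desc (collapseChain G g) (collapseCocone G g)) := by
  refine (hC.isSeparating.mono_iff _).2 fun T hT a b hab => ?_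
  obtain ⟨i, ⟨φ⟩⟩ := hG T hT
  obtain ⟨n, a', b', rfl, rfl⟩ := hT.exists_factor₂_of_nat (colimit.isColimit _) a b
  simp only [colimit.cocone_ι, Category.assoc, colimit.ι_desc] at hab
  have hq := comp_collapseChain_map_succ_eq G g n (φ.hom ≫ a') (φ.hom ≫ b') (by simp [hab])
  refine (cancel_epi φ.hom).1 ?_
  simp only [colimit.cocone_ι, ← colimit.w (collapseChain G g) (homOfLE (n.le_add_right 1))]
  simpa using hq =≫ colimit.ι (collapseChain G g) (n + 1)

end Collapse

theorem IsLFP.exists_llp_mono_factorization (hC : IsLFP C) {A B : C} (g : A ⟶ B)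
    (hA : IsFG A) : ∃ (M : C) (e : A ⟶ M) (m : M ⟶ B),
      (MorphismProperty.monomorphisms C).llp e ∧ Mono m ∧ IsFG M ∧ e ≫ m = g := by
  have := hC.1
  obtain ⟨ι, G, hG⟩ := hC.exists_family_isFP
  exact ⟨_, colimit.ι (collapseChain G g) 0, colimit.desc _ (collapseCocone G g),
    llp_collapseChain_ι_zero G g, mono_desc_collapseCocone G g hC hG,
    hA.of_llp hC (llp_collapseChain_ι_zero G g), colimit.ι_desc _ _⟩

theorem exists_str_of_llp_of_mono {H : C ⥤ C} (hH : PreservesNonemptyMonos H)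
    {P X : Endofunctor.Coalgebra H} (h : P ⟶ X) {M : C} {e : P.V ⟶ M} {m : M ⟶ X.V}
    (he : (MorphismProperty.monomorphisms C).llp e) [Mono m] (hfac : e ≫ m = h.f) :
    ∃ str : M ⟶ H.obj M, str ≫ H.map m = m ≫ X.str := by
  by_cases hM : IsStrictInitial M
  · obtain ⟨⟨hi⟩, -⟩ := hM
    exact ⟨hi.to _, hi.hom_ext _ _⟩
  · have := hH m ‹_› hM
    have := he (H.map m) (MorphismProperty.monomorphisms.infer_property _)
    let sq : CommSq (P.str ≫ H.map e) e (H.map m) (m ≫ X.str) :=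
      ⟨by rw [Category.assoc, ← H.map_comp, hfac, h.h, ← hfac, Category.assoc]⟩
    exact ⟨sq.lift, sq.fac_right⟩

end LFF

open LFF in
theorem stmt7_general {C : Type u} [Category.{v} C] (hC : IsLFP C)
    (H : C ⥤ C) (hm : PreservesNonemptyMonos H)
    (X : Endofunctor.Coalgebra H) :
    IsLFGCoalgebra H X ↔
      ∀ (S : C), IsFG S → ∀ f : S ⟶ X.V, Mono f →
        ∃ (P : Endofunctor.Coalgebra H) (h : P ⟶ X) (f' : S ⟶ P.V),
          IsFG P.V ∧ Mono h.f ∧ Mono f' ∧ f' ≫ h.f = f := by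
  constructor
  · rintro hlfg S hS f hf
    obtain ⟨P, h, f₁, hP, rfl⟩ := hlfg S hS f
    obtain ⟨M, e, m, he, _, hM, hfac⟩ := hC.exists_llp_mono_factorization h.f hP
    obtain ⟨str, hstr⟩ := exists_str_of_llp_of_mono hm h he hfac
    have : Mono ((f₁ ≫ e) ≫ m) := by rwa [Category.assoc, hfac]
    exact ⟨⟨M, str⟩, ⟨m, hstr⟩, f₁ ≫ e, hM, ‹_›, mono_of_mono _ m, by rw [Category.assoc, hfac]⟩
  · rintro hsub S hS f
    obtain ⟨M, e, m, -, _, hM, rfl⟩ := hC.exists_llp_mono_factorization f hS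
    obtain ⟨P, h, f', hP, -, -, hf'⟩ := hsub M hM m ‹_›
    exact ⟨P, h, e ≫ f', hP, by rw [Category.assoc, hf']⟩

open LFF in
/-- A coalgebra is lfg iff every finitely generated subobject of its carrier factors,
via a monomorphism, through a mono-carried subcoalgebra with finitely generated carrier. -/
theorem stmt7 {C : Type u} [Category.{v} C] (hC : IsLFP C)
    (H : C ⥤ C) (hfin : IsFinitary H) (hm : PreservesNonemptyMonos H)
    (X : Endofunctor.Coalgebra H) :
    IsLFGCoalgebra H X ↔
      ∀ (S : C), IsFG S → ∀ f : S ⟶ X.V, Mono f →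
        ∃ (P : Endofunctor.Coalgebra H) (h : P ⟶ X) (f' : S ⟶ P.V),
          IsFG P.V ∧ Mono h.f ∧ Mono f' ∧ f' ≫ h.f = f :=
  stmt7_general hC H hm X
end

section
/- Every locally finitely generated coalgebra is the directed colimit of its subcoalgebras with finitely generated carrier (the diagram of fg-carried subcoalgebras is cofinal in the diagram of all fg subobjects of the carrier). -/
/-!
In an lfp category every morphism `f : A ⟶ Y` has a (strong epi, mono) factorisation: coequalise
all pairs of fp-elements of `A` that `f` identifies and repeat ω times; the induced map out of the
colimit is mono because an fp object sees the colimit at a finite stage, where the next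
coequaliser has already merged the pair. A strong quotient of an fg object is fg.

For a coalgebra homomorphism `h : P ⟶ X` with `h = e ≫ m`, the diagonal fill-in of the strong epi
`e` against `H m` (a mono because `H` preserves non-empty monos; if the image is strict initial,
`e` itself is invertible) is a coalgebra structure on the image, making it a subcoalgebra of `X`.

As `X` is lfg, every fp-element of its carrier factors through an fg-carried subcoalgebra, and the
image of the coproduct of two such contains both, so these subcoalgebras form a directed family.
Its cocone has mono legs through which every fp-element of the carrier factors; in an lfp
category such a cocone is a colimit, and colimits of coalgebras are computed on carriers.
-/

open CategoryTheory CategoryTheory.Limits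

universe v u

namespace LFF

open Endofunctor

variable {C : Type u} [Category.{v} C]

section CoyonedaColimit

variable {J : Type v} [SmallCategory J] {F : J ⥤ C} {c : Cocone F} {G : C}

theorem exists_comp_ι_eq (hc : IsColimit ((coyoneda.obj (Opposite.op G)).mapCocone c))
    (x : G ⟶ c.pt) : ∃ (j : J) (y : G ⟶ F.obj j), y ≫ c.ι.app j = x :=
  Types.jointly_surjective _ hc x

variable [IsFiltered J]

theorem exists_comp_ι_eq₂ (hc : IsColimit ((coyoneda.obj (Opposite.op G)).mapCocone c))
    (x₁ x₂ : G ⟶ c.pt) :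
    ∃ (j : J) (y₁ y₂ : G ⟶ F.obj j), y₁ ≫ c.ι.app j = x₁ ∧ y₂ ≫ c.ι.app j = x₂ := by
  obtain ⟨j₁, y₁, rfl⟩ := exists_comp_ι_eq hc x₁
  obtain ⟨j₂, y₂, rfl⟩ := exists_comp_ι_eq hc x₂
  refine ⟨IsFiltered.max j₁ j₂, y₁ ≫ F.map (IsFiltered.leftToMax j₁ j₂),
    y₂ ≫ F.map (IsFiltered.rightToMax j₁ j₂), ?_, ?_⟩ <;> simp

theorem exists_comp_map_eq_of_comp_ι_eq
    (hc : IsColimit ((coyoneda.obj (Opposite.op G)).mapCocone c)) {i : J}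
    {x y : G ⟶ F.obj i} (h : x ≫ c.ι.app i = y ≫ c.ι.app i) :
    ∃ (k : J) (f : i ⟶ k), x ≫ F.map f = y ≫ F.map f := by
  obtain ⟨k, f, g, hfg⟩ := (Types.FilteredColimit.isColimit_eq_iff _ hc).1 h
  refine ⟨IsFiltered.coeq f g, f ≫ IsFiltered.coeqHom f g, ?_⟩
  change x ≫ F.map f = y ≫ F.map g at hfg
  rw [F.map_comp, reassoc_of% hfg, ← F.map_comp, ← IsFiltered.coeq_condition, F.map_comp]

end CoyonedaColimit

theorem IsFP.isFG {G : C} (h : IsFP G) : IsFG G := fun J _ _ F _ c hc => h J F c hc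

theorem IsFP.exists_comp_ι_eq₂_of_nat {G : C} (hG : IsFP G) {F : ℕ ⥤ C} {c : Cocone F}
    (hc : IsColimit c) (x₁ x₂ : G ⟶ c.pt) :
    ∃ (n : ℕ) (y₁ y₂ : G ⟶ F.obj n), y₁ ≫ c.ι.app n = x₁ ∧ y₂ ≫ c.ι.app n = x₂ := by
  obtain ⟨j, y₁, y₂, h₁, h₂⟩ := exists_comp_ι_eq₂ (hG _ _ _
    ⟨hc.whiskerEquivalence (AsSmall.equiv : ℕ ≌ AsSmall.{v} ℕ).symm⟩).some x₁ x₂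
  exact ⟨AsSmall.down.obj j, y₁, y₂, h₁, h₂⟩

namespace IsLFP

theorem hom_ext (hC : IsLFP C) {T Z : C} {u v : T ⟶ Z}
    (h : ∀ G, IsFP G → ∀ g : G ⟶ T, g ≫ u = g ≫ v) : u = v := by
  obtain ⟨J, _, _, F, c, hF, ⟨hc⟩, ⟨ρ⟩⟩ := hC.2.2 T
  rw [← cancel_epi ρ.hom]
  exact hc.hom_ext fun j => by simpa using h _ (hF j) (c.ι.app j ≫ ρ.hom)

theorem exists_comp_eq_of_mono (hC : IsLFP C) {A B Z : C} (m : B ⟶ Z) [Mono m] (f : A ⟶ Z)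
    (h : ∀ G, IsFP G → ∀ g : G ⟶ A, ∃ g' : G ⟶ B, g' ≫ m = g ≫ f) :
    ∃ f' : A ⟶ B, f' ≫ m = f := by
  obtain ⟨J, _, _, F, c, hF, ⟨hc⟩, ⟨ρ⟩⟩ := hC.2.2 A
  choose t ht using fun j => h _ (hF j) (c.ι.app j ≫ ρ.hom)
  let d : c.pt ⟶ B := hc.desc
    { pt := B
      ι := { app := t
             naturality := fun i j k => by
               rw [← cancel_mono m]
               simp [ht] } }
  refine ⟨ρ.inv ≫ d, ?_⟩
  rw [← cancel_epi ρ.hom, Category.assoc, Iso.hom_inv_id_assoc]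
  exact hc.hom_ext fun j => by simp [d, ht]

theorem isIso_of_mono (hC : IsLFP C) {B Z : C} (m : B ⟶ Z) [Mono m]
    (h : ∀ G, IsFP G → ∀ g : G ⟶ Z, ∃ g' : G ⟶ B, g' ≫ m = g) : IsIso m := by
  obtain ⟨s, hs⟩ := hC.exists_comp_eq_of_mono m (𝟙 Z) (by simpa using h)
  exact ⟨s, by rw [← cancel_mono m, Category.assoc, hs, Category.comp_id, Category.id_comp], hs⟩

section FilteredColimit

variable {J : Type v} [SmallCategory J] [IsFiltered J] {F : J ⥤ C}

theorem mono_ι_s9 (hC : IsLFP C) (hF : ∀ ⦃i j : J⦄ (f : i ⟶ j), Mono (F.map f)) {c : Cocone F}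
    (hc : IsColimit c) (j : J) : Mono (c.ι.app j) :=
  ⟨fun u v huv => hC.hom_ext fun G hG g => by
    obtain ⟨k, f, hf⟩ := exists_comp_map_eq_of_comp_ι_eq (hG J F c ⟨hc⟩).some
      (x := g ≫ u) (y := g ≫ v) (by simp [huv])
    have := hF f
    exact (cancel_mono (F.map f)).1 hf⟩

theorem isColimit_of_mono_ι (hC : IsLFP C) (c : Cocone F) (hc : ∀ j, Mono (c.ι.app j))
    (h : ∀ G, IsFP G → ∀ g : G ⟶ c.pt, ∃ (j : J) (g' : G ⟶ F.obj j), g' ≫ c.ι.app j = g) :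
    Nonempty (IsColimit c) := by
  have := hC.1
  let t := (colimit.isColimit F).desc c
  have ht : ∀ j, colimit.ι F j ≫ t = c.ι.app j := (colimit.isColimit F).fac c
  have : Mono t := ⟨fun x y hxy => hC.hom_ext fun G hG g => by
    obtain ⟨j, x', y', hx, hy⟩ :=
      exists_comp_ι_eq₂ (hG J F _ ⟨colimit.isColimit F⟩).some (g ≫ x) (g ≫ y)
    change x' ≫ colimit.ι F j = g ≫ x at hx
    change y' ≫ colimit.ι F j = g ≫ y at hy
    have := hc j
    have : x' = y' := (cancel_mono (c.ι.app j)).1 <| by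
      rw [← ht, ← Category.assoc, ← Category.assoc, hx, hy, Category.assoc, Category.assoc, hxy]
    rw [← hx, ← hy, this]⟩
  have : IsIso t := hC.isIso_of_mono t fun G hG g => by
    obtain ⟨j, g', rfl⟩ := h G hG g
    exact ⟨g' ≫ colimit.ι F j, by rw [Category.assoc, ht]⟩
  exact ⟨IsColimit.ofPointIso (colimit.isColimit F)⟩

end FilteredColimit

theorem isFG_of_forall_exists_comp_ι_eq (hC : IsLFP C) {A : C}
    (h : ∀ (J : Type v) [SmallCategory J] [IsFiltered J] (F : J ⥤ C),
      (∀ ⦃i j : J⦄ (f : i ⟶ j), Mono (F.map f)) → ∀ c : Cocone F, IsColimit c →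
      ∀ x : A ⟶ c.pt, ∃ (j : J) (y : A ⟶ F.obj j), y ≫ c.ι.app j = x) :
    IsFG A := by
  intro J _ _ F hF c ⟨hc⟩
  refine ⟨Types.FilteredColimit.isColimitOf _ _ (fun x => ?_) fun i j x y hxy => ?_⟩
  · obtain ⟨j, y, rfl⟩ := h J F hF c hc x
    exact ⟨j, y, rfl⟩
  · change x ≫ c.ι.app i = y ≫ c.ι.app j at hxy
    obtain ⟨k, f, g, -⟩ := IsFilteredOrEmpty.cocone_objs i j
    have := hC.mono_ι_s9 hF hc k
    exact ⟨k, f, g, (cancel_mono (c.ι.app k)).1 (by simpa using hxy)⟩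

theorem isFG_coprod (hC : IsLFP C) [HasBinaryCoproducts C] {A B : C} (hA : IsFG A)
    (hB : IsFG B) : IsFG (A ⨿ B) :=
  hC.isFG_of_forall_exists_comp_ι_eq fun J _ _ F hF c hc x => by
    obtain ⟨i, y₁, hy₁⟩ := exists_comp_ι_eq (hA J F hF c ⟨hc⟩).some (coprod.inl ≫ x)
    obtain ⟨j, y₂, hy₂⟩ := exists_comp_ι_eq (hB J F hF c ⟨hc⟩).some (coprod.inr ≫ x)
    refine ⟨IsFiltered.max i j, coprod.desc (y₁ ≫ F.map (IsFiltered.leftToMax i j))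
      (y₂ ≫ F.map (IsFiltered.rightToMax i j)), coprod.hom_ext ?_ ?_⟩
    · rw [coprod.inl_desc_assoc, Category.assoc, c.w, hy₁]
    · rw [coprod.inr_desc_assoc, Category.assoc, c.w, hy₂]

theorem isFG_of_strongEpi (hC : IsLFP C) {A B : C} (e : A ⟶ B) [StrongEpi e] (hA : IsFG A) :
    IsFG B :=
  hC.isFG_of_forall_exists_comp_ι_eq fun J _ _ F hF c hc x => by
    obtain ⟨j, y, hy⟩ := exists_comp_ι_eq (hA J F hF c ⟨hc⟩).some (e ≫ x)
    have := hC.mono_ι_s9 hF hc j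
    have sq : CommSq y e (c.ι.app j) x := ⟨hy⟩
    exact ⟨j, sq.lift, sq.fac_right⟩

end IsLFP

theorem strongEpi_ι_zero_of_isColimit {F : ℕ ⥤ C}
    (hF : ∀ n, StrongEpi (F.map (homOfLE (Nat.le_succ n)))) {c : Cocone F} (hc : IsColimit c) :
    StrongEpi (c.ι.app 0) := by
  refine ⟨⟨fun u v huv => hc.hom_ext fun n => ?_⟩, fun W Z M _ => ⟨fun {a b} sq => ?_⟩⟩
  · induction n with
    | zero => exact huv
    | succ n ih =>
      refine (cancel_epi (F.map (homOfLE (Nat.le_succ n)))).1 ?_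
      rwa [c.w_assoc, c.w_assoc]
  · have lifts : ∀ n, {d : F.obj n ⟶ W // d ≫ M = c.ι.app n ≫ b} := fun n => by
      induction n with
      | zero => exact ⟨a, sq.w⟩
      | succ n ih =>
        have sq' : CommSq ih.1 (F.map (homOfLE (Nat.le_succ n))) M (c.ι.app (n + 1) ≫ b) :=
          ⟨by rw [ih.2, c.w_assoc]⟩
        exact ⟨sq'.lift, sq'.fac_right⟩
    let d : Cocone F :=
      { pt := W
        ι := { app := fun n => (lifts n).1
               naturality := fun i j k => by
                 rw [← cancel_mono M, Category.assoc, (lifts j).2, c.w_assoc]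
                 simpa using (lifts i).2.symm } }
    exact ⟨⟨{ l := hc.desc d
              fac_left := (hc.fac d 0).trans ((cancel_mono M).1 ((lifts 0).2.trans sq.w.symm))
              fac_right := hc.hom_ext fun n => by
                rw [← Category.assoc, hc.fac]
                exact (lifts n).2 }⟩⟩

section FPModel

variable [EssentiallySmall.{v} (ObjectProperty.FullSubcategory (IsFP (C := C)))]

variable (C) in
abbrev FPModel : Type v := SmallModel.{v} (ObjectProperty.FullSubcategory (IsFP (C := C)))

noncomputable def FPModel.obj (s : FPModel C) : C :=
  ((equivSmallModel (ObjectProperty.FullSubcategory (IsFP (C := C)))).inverse.obj s).obj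

theorem FPModel.exists_iso {G : C} (hG : IsFP G) : ∃ s : FPModel C, Nonempty (s.obj ≅ G) :=
  ⟨(equivSmallModel _).functor.obj ⟨G, hG⟩, ⟨(ObjectProperty.ι IsFP).mapIso
    ((equivSmallModel (ObjectProperty.FullSubcategory (IsFP (C := C)))).unitIso.app ⟨G, hG⟩).symm⟩⟩

def fpElements {B Z : C} (m : B ⟶ Z) : Set (Σ s : FPModel C, s.obj ⟶ Z) :=
  {p | ∃ w, w ≫ m = p.2}

theorem fpElements_subset_of_comp_eq {B₁ B₂ Z : C} {m₁ : B₁ ⟶ Z} {m₂ : B₂ ⟶ Z} (f : B₁ ⟶ B₂)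
    (h : f ≫ m₂ = m₁) : fpElements m₁ ⊆ fpElements m₂ :=
  fun _ ⟨w, hw⟩ => ⟨w ≫ f, by rw [Category.assoc, h, hw]⟩

theorem IsLFP.exists_comp_eq_of_fpElements_subset (hC : IsLFP C) {B₁ B₂ Z : C} {m₁ : B₁ ⟶ Z}
    (m₂ : B₂ ⟶ Z) [Mono m₂] (h : fpElements m₁ ⊆ fpElements m₂) : ∃ f, f ≫ m₂ = m₁ :=
  hC.exists_comp_eq_of_mono m₂ m₁ fun G hG g => by
    obtain ⟨s, ⟨φ⟩⟩ := FPModel.exists_iso hG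
    obtain ⟨w, hw⟩ :=
      h (show ⟨s, φ.hom ≫ g ≫ m₁⟩ ∈ fpElements m₁ from ⟨φ.hom ≫ g, Category.assoc _ _ _⟩)
    exact ⟨φ.inv ≫ w, by rw [Category.assoc, hw, Iso.inv_hom_id_assoc]⟩

end FPModel

section Image

variable [HasColimits C] [EssentiallySmall.{v} (ObjectProperty.FullSubcategory (IsFP (C := C)))]
variable {A Y : C}

abbrev FPKernelPair (f : A ⟶ Y) : Type v :=
  {p : Σ s : FPModel C, (s.obj ⟶ A) × (s.obj ⟶ A) // p.2.1 ≫ f = p.2.2 ≫ f}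

noncomputable def fpQuotient (f : A ⟶ Y) : C :=
  coequalizer (Sigma.desc fun p : FPKernelPair f => p.1.2.1)
    (Sigma.desc fun p : FPKernelPair f => p.1.2.2)

namespace fpQuotient

noncomputable def π (f : A ⟶ Y) : A ⟶ fpQuotient f := coequalizer.π _ _

noncomputable def desc (f : A ⟶ Y) : fpQuotient f ⟶ Y :=
  coequalizer.desc f (Sigma.hom_ext _ _ fun p => by simpa using p.2)

@[simp]
theorem π_desc (f : A ⟶ Y) : π f ≫ desc f = f := coequalizer.π_desc _ _

instance strongEpi_π (f : A ⟶ Y) : StrongEpi (π f) :=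
  inferInstanceAs (StrongEpi (coequalizer.π _ _))

theorem π_eq_π {f : A ⟶ Y} {G : C} (hG : IsFP G) {x y : G ⟶ A} (h : x ≫ f = y ≫ f) :
    x ≫ π f = y ≫ π f := by
  obtain ⟨s, ⟨φ⟩⟩ := FPModel.exists_iso hG
  have := Sigma.ι (fun p : FPKernelPair f => p.1.1.obj) ⟨⟨s, φ.hom ≫ x, φ.hom ≫ y⟩, by simp [h]⟩ ≫=
    coequalizer.condition (Sigma.desc fun p : FPKernelPair f => p.1.2.1)
      (Sigma.desc fun p : FPKernelPair f => p.1.2.2)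
  simp only [colimit.ι_desc_assoc, Cofan.mk_ι_app, Discrete.functor_obj_eq_as,
    Category.assoc] at this
  exact (cancel_epi φ.hom).1 this

end fpQuotient

noncomputable def fpQuotientSeq (f : A ⟶ Y) : ℕ → Over Y
  | 0 => Over.mk f
  | n + 1 => Over.mk (fpQuotient.desc (fpQuotientSeq f n).hom)

noncomputable def fpQuotientChain (f : A ⟶ Y) : ℕ ⥤ Over Y :=
  Functor.ofSequence fun n =>
    Over.homMk (V := fpQuotientSeq f (n + 1)) (fpQuotient.π (fpQuotientSeq f n).hom)
      (fpQuotient.π_desc _)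

theorem fpQuotientChain_map_succ (f : A ⟶ Y) (n : ℕ) :
    ((fpQuotientChain f).map (homOfLE (Nat.le_succ n))).left =
      fpQuotient.π (fpQuotientSeq f n).hom := by
  simp only [fpQuotientChain, Functor.ofSequence_map_homOfLE_succ]
  rfl

theorem mono_desc_fpQuotientChain (hC : IsLFP C) (f : A ⟶ Y) :
    Mono (colimit.desc _ ((Over.forgetCocone Y).whisker (fpQuotientChain f))) := by
  set F := fpQuotientChain f ⋙ Over.forget Y
  set m : colimit F ⟶ Y := colimit.desc F ((Over.forgetCocone Y).whisker (fpQuotientChain f))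
  have hιm : ∀ n, colimit.ι F n ≫ m = (fpQuotientSeq f n).hom := fun n => colimit.ι_desc _ n
  refine ⟨fun u v huv => hC.hom_ext fun G hG g => ?_⟩
  obtain ⟨n, x, y, hx, hy⟩ := hG.exists_comp_ι_eq₂_of_nat (colimit.isColimit F) (g ≫ u) (g ≫ v)
  change x ≫ colimit.ι F n = g ≫ u at hx
  change y ≫ colimit.ι F n = g ≫ v at hy
  have hxy : x ≫ (fpQuotientSeq f n).hom = y ≫ (fpQuotientSeq f n).hom := by
    rw [← hιm, ← Category.assoc, ← Category.assoc, hx, hy, Category.assoc, Category.assoc]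
    exact congrArg (g ≫ ·) huv
  have hxy' : x ≫ F.map (homOfLE n.le_succ) = y ≫ F.map (homOfLE n.le_succ) := by
    have e : F.map (homOfLE n.le_succ) = fpQuotient.π (fpQuotientSeq f n).hom :=
      fpQuotientChain_map_succ f n
    rw [e]
    exact fpQuotient.π_eq_π hG hxy
  rw [← hx, ← hy, ← colimit.w F (homOfLE n.le_succ), ← Category.assoc, hxy', Category.assoc]

noncomputable def fpImageFactorisation (hC : IsLFP C) (f : A ⟶ Y) :
    StrongEpiMonoFactorisation f where
  I := colimit (fpQuotientChain f ⋙ Over.forget Y)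
  m := colimit.desc _ ((Over.forgetCocone Y).whisker (fpQuotientChain f))
  m_mono := mono_desc_fpQuotientChain hC f
  e := colimit.ι (fpQuotientChain f ⋙ Over.forget Y) 0
  fac := colimit.ι_desc _ _
  e_strong_epi := strongEpi_ι_zero_of_isColimit (fun n => by
    rw [Functor.comp_map, Over.forget_map, fpQuotientChain_map_succ]
    exact fpQuotient.strongEpi_π _) (colimit.isColimit _)

end Image

theorem IsLFP.hasStrongEpiMonoFactorisations (hC : IsLFP C) :
    HasStrongEpiMonoFactorisations C := by
  have := hC.1
  have := hC.2.1
  exact ⟨fun f => ⟨fpImageFactorisation hC f⟩⟩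

section Coalgebra

variable {H : C ⥤ C}

theorem PreservesNonemptyMonos.hasLiftingProperty (hm : PreservesNonemptyMonos H) {A B Z : C}
    (e : A ⟶ B) [StrongEpi e] (m : B ⟶ Z) [Mono m] : HasLiftingProperty e (H.map m) := by
  by_cases hB : IsStrictInitial B
  · have := hB.2 A e
    infer_instance
  · have := hm m inferInstance hB
    infer_instance

theorem PreservesNonemptyMonos.exists_hom_comp_eq (hm : PreservesNonemptyMonos H)
    {Q S X : Coalgebra H} (q : Q ⟶ X) (m : S ⟶ X) [Mono m.f] {φ : Q.V ⟶ S.V}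
    (hφ : φ ≫ m.f = q.f) : ∃ ψ : Q ⟶ S, ψ ≫ m = q := by
  refine ⟨⟨φ, ?_⟩, Coalgebra.ext hφ⟩
  by_cases hS : IsStrictInitial S.V
  · have := hS.2 _ φ
    exact (hS.1.some.ofIso (asIso φ).symm).hom_ext _ _
  · have := hm m.f inferInstance hS
    rw [← cancel_mono (H.map m.f), Category.assoc, ← H.map_comp, hφ, Category.assoc, m.h,
      ← Category.assoc, hφ, q.h]

section ImageCoalgebra

variable (hm : PreservesNonemptyMonos H) {P X : Coalgebra H} (h : P ⟶ X)
  (F : StrongEpiMonoFactorisation h.f)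

theorem commSq_imageCoalgebra :
    CommSq (P.str ≫ H.map F.e) F.e (H.map F.m) (F.m ≫ X.str) :=
  ⟨by rw [Category.assoc, ← H.map_comp, F.fac, h.h, ← Category.assoc, F.fac]⟩

noncomputable def imageCoalgebra : Coalgebra H where
  V := F.I
  str := have := hm.hasLiftingProperty F.e F.m; (commSq_imageCoalgebra h F).lift

noncomputable def toImageCoalgebra : P ⟶ imageCoalgebra hm h F where
  f := F.e
  h := have := hm.hasLiftingProperty F.e F.m; (commSq_imageCoalgebra h F).fac_left.symm

noncomputable def imageCoalgebraι : imageCoalgebra hm h F ⟶ X where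
  f := F.m
  h := have := hm.hasLiftingProperty F.e F.m; (commSq_imageCoalgebra h F).fac_right

theorem toImageCoalgebra_comp_imageCoalgebraι :
    toImageCoalgebra hm h F ≫ imageCoalgebraι hm h F = h :=
  Coalgebra.ext F.fac

end ImageCoalgebra

noncomputable abbrev coprodCoalgebra [HasBinaryCoproducts C] (A B : Coalgebra H) :
    Coalgebra H where
  V := A.V ⨿ B.V
  str := coprod.desc (A.str ≫ H.map coprod.inl) (B.str ≫ H.map coprod.inr)

noncomputable def coprodCoalgebraDesc [HasBinaryCoproducts C] {A B X : Coalgebra H} (f : A ⟶ X)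
    (g : B ⟶ X) : coprodCoalgebra A B ⟶ X where
  f := coprod.desc f.f g.f
  h := coprod.hom_ext
    (by rw [coprod.inl_desc_assoc, coprod.inl_desc_assoc, Category.assoc, ← H.map_comp,
      coprod.inl_desc, f.h])
    (by rw [coprod.inr_desc_assoc, coprod.inr_desc_assoc, Category.assoc, ← H.map_comp,
      coprod.inr_desc, g.h])

def isColimitOfIsColimitMapCoconeForget {J : Type*} [Category J] {D : J ⥤ Coalgebra H}
    (c : Cocone D) (hc : IsColimit ((Coalgebra.forget H).mapCocone c)) : IsColimit c where
  desc s :=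
    { f := hc.desc ((Coalgebra.forget H).mapCocone s)
      h := hc.hom_ext fun j => by
        set d : c.pt.V ⟶ s.pt.V := hc.desc ((Coalgebra.forget H).mapCocone s)
        have hd : (c.ι.app j).f ≫ d = (s.ι.app j).f := hc.fac ((Coalgebra.forget H).mapCocone s) j
        have hc_j : (c.ι.app j).f ≫ c.pt.str = (D.obj j).str ≫ H.map (c.ι.app j).f :=
          (c.ι.app j).h.symm
        have hs_j : (s.ι.app j).f ≫ s.pt.str = (D.obj j).str ≫ H.map (s.ι.app j).f :=
          (s.ι.app j).h.symm
        change (c.ι.app j).f ≫ c.pt.str ≫ H.map d = (c.ι.app j).f ≫ d ≫ s.pt.str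
        rw [← Category.assoc, hc_j, Category.assoc, ← H.map_comp, hd, ← Category.assoc, hd,
          hs_j] }
  fac s j := Coalgebra.ext (hc.fac _ j)
  uniq s w hw := Coalgebra.ext (hc.uniq ((Coalgebra.forget H).mapCocone s) w.f
    fun j => congrArg Coalgebra.Hom.f (hw j))

structure FGSubcoalgebra (X : Coalgebra H) where
  obj : Coalgebra H
  ι : obj ⟶ X
  mono_ι_s9 : Mono ι.f
  isFG : IsFG obj.V

attribute [instance] FGSubcoalgebra.mono_ι_s9

namespace FGSubcoalgebra

variable {X : Coalgebra H}

instance (S : FGSubcoalgebra X) : Mono S.ι := Coalgebra.mono_of_mono _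

theorem exists_of_hom (hC : IsLFP C) (hm : PreservesNonemptyMonos H) {P : Coalgebra H}
    (h : P ⟶ X) (hP : IsFG P.V) : ∃ (S : FGSubcoalgebra X) (e : P ⟶ S.obj), e ≫ S.ι = h := by
  have := hC.hasStrongEpiMonoFactorisations
  obtain ⟨F⟩ := HasStrongEpiMonoFactorisations.has_fac h.f
  exact ⟨⟨imageCoalgebra hm h F, imageCoalgebraι hm h F, F.m_mono,
    (hC.isFG_of_strongEpi F.e hP : IsFG F.I)⟩,
    toImageCoalgebra hm h F, toImageCoalgebra_comp_imageCoalgebraι hm h F⟩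

theorem exists_comp_ι_eq (hC : IsLFP C) (hm : PreservesNonemptyMonos H)
    (hX : IsLFGCoalgebra H X) {G : C} (hG : IsFP G) (g : G ⟶ X.V) :
    ∃ (S : FGSubcoalgebra X) (w : G ⟶ S.obj.V), w ≫ S.ι.f = g := by
  obtain ⟨P, h, w, hP, hw⟩ := hX G hG.isFG g
  obtain ⟨S, e, he⟩ := exists_of_hom hC hm h hP
  exact ⟨S, w ≫ e.f, by rw [Category.assoc, ← Coalgebra.comp_f, he, hw]⟩

variable [EssentiallySmall.{v} (ObjectProperty.FullSubcategory (IsFP (C := C)))]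

theorem exists_hom_of_fpElements_subset (hC : IsLFP C) (hm : PreservesNonemptyMonos H)
    {S T : FGSubcoalgebra X} (h : fpElements S.ι.f ⊆ fpElements T.ι.f) :
    ∃ g : S.obj ⟶ T.obj, g ≫ T.ι = S.ι := by
  obtain ⟨φ, hφ⟩ := hC.exists_comp_eq_of_fpElements_subset T.ι.f h
  exact hm.exists_hom_comp_eq S.ι T.ι hφ

theorem exists_fpElements_subset (hC : IsLFP C) (hm : PreservesNonemptyMonos H)
    (S₁ S₂ : FGSubcoalgebra X) :
    ∃ T : FGSubcoalgebra X, fpElements S₁.ι.f ⊆ fpElements T.ι.f ∧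
      fpElements S₂.ι.f ⊆ fpElements T.ι.f := by
  have := hC.1
  obtain ⟨T, e, he⟩ := exists_of_hom hC hm (coprodCoalgebraDesc S₁.ι S₂.ι)
    (hC.isFG_coprod S₁.isFG S₂.isFG)
  have hef : e.f ≫ T.ι.f = coprod.desc S₁.ι.f S₂.ι.f := congrArg Coalgebra.Hom.f he
  exact ⟨T, fpElements_subset_of_comp_eq (coprod.inl ≫ e.f)
      (by rw [Category.assoc, hef, coprod.inl_desc]),
    fpElements_subset_of_comp_eq (coprod.inr ≫ e.f) (by rw [Category.assoc, hef, coprod.inr_desc])⟩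

end FGSubcoalgebra

variable [EssentiallySmall.{v} (ObjectProperty.FullSubcategory (IsFP (C := C)))]

/-- The fg subcoalgebras of `X` form a large collection; indexing them by their sets of
fp-elements gives a small poset, and in an lfp category nothing is lost
(`IsLFP.exists_comp_eq_of_fpElements_subset`). -/
abbrev FGSubcoalgebraIndex (X : Coalgebra H) : Type v :=
  Set.range fun S : FGSubcoalgebra X => fpElements S.ι.f

namespace FGSubcoalgebraIndex

variable {X : Coalgebra H}

noncomputable def rep (a : FGSubcoalgebraIndex X) : FGSubcoalgebra X := a.2.choose

theorem fpElements_rep (a : FGSubcoalgebraIndex X) : fpElements a.rep.ι.f = a.1 :=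
  a.2.choose_spec

def of (S : FGSubcoalgebra X) : FGSubcoalgebraIndex X := ⟨_, S, rfl⟩

theorem exists_comp_ι_eq_of (hC : IsLFP C) (S : FGSubcoalgebra X) :
    ∃ φ : S.obj.V ⟶ (of S).rep.obj.V, φ ≫ (of S).rep.ι.f = S.ι.f :=
  hC.exists_comp_eq_of_fpElements_subset _ (fpElements_rep (of S)).symm.subset

theorem nonempty (hC : IsLFP C) (hm : PreservesNonemptyMonos H) (hX : IsLFGCoalgebra H X) :
    Nonempty (FGSubcoalgebraIndex X) := by
  obtain ⟨J, _, _, F, c, hF, -, ⟨ρ⟩⟩ := hC.2.2 X.V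
  obtain ⟨j⟩ := IsFiltered.nonempty (C := J)
  obtain ⟨S, -⟩ := FGSubcoalgebra.exists_comp_ι_eq hC hm hX (hF j) (c.ι.app j ≫ ρ.hom)
  exact ⟨of S⟩

theorem isDirected (hC : IsLFP C) (hm : PreservesNonemptyMonos H) :
    IsDirected (FGSubcoalgebraIndex X) (· ≤ ·) := ⟨by
  rintro ⟨_, S₁, rfl⟩ ⟨_, S₂, rfl⟩
  obtain ⟨T, h₁, h₂⟩ := FGSubcoalgebra.exists_fpElements_subset hC hm S₁ S₂
  exact ⟨of T, h₁, h₂⟩⟩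

theorem exists_hom_of_le (hC : IsLFP C) (hm : PreservesNonemptyMonos H)
    {a b : FGSubcoalgebraIndex X} (hab : a ≤ b) :
    ∃ g : a.rep.obj ⟶ b.rep.obj, g ≫ b.rep.ι = a.rep.ι :=
  FGSubcoalgebra.exists_hom_of_fpElements_subset hC hm <| by
    rw [fpElements_rep, fpElements_rep]
    exact hab

noncomputable def transition (hC : IsLFP C) (hm : PreservesNonemptyMonos H)
    {a b : FGSubcoalgebraIndex X} (hab : a ≤ b) : a.rep.obj ⟶ b.rep.obj :=
  (exists_hom_of_le hC hm hab).choose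

theorem transition_comp_ι (hC : IsLFP C) (hm : PreservesNonemptyMonos H)
    {a b : FGSubcoalgebraIndex X} (hab : a ≤ b) :
    transition hC hm hab ≫ b.rep.ι = a.rep.ι :=
  (exists_hom_of_le hC hm hab).choose_spec

variable (X) in
noncomputable def diagram (hC : IsLFP C) (hm : PreservesNonemptyMonos H) :
    FGSubcoalgebraIndex X ⥤ Coalgebra H where
  obj a := a.rep.obj
  map g := transition hC hm (leOfHom g)
  map_id a := by rw [← cancel_mono a.rep.ι, transition_comp_ι, Category.id_comp]
  map_comp f g := by
    rw [← cancel_mono (FGSubcoalgebra.ι _), transition_comp_ι, Category.assoc,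
      transition_comp_ι, transition_comp_ι]

theorem mono_diagram_map (hC : IsLFP C) (hm : PreservesNonemptyMonos H)
    {a b : FGSubcoalgebraIndex X} (g : a ⟶ b) : Mono ((diagram X hC hm).map g).f :=
  have : Mono (transition hC hm (leOfHom g)).f :=
    mono_of_mono_fac (congrArg Coalgebra.Hom.f (transition_comp_ι hC hm (leOfHom g)))
  this

variable (X) in
noncomputable def cocone (hC : IsLFP C) (hm : PreservesNonemptyMonos H) :
    Cocone (diagram X hC hm) where
  pt := X
  ι := { app := fun a => a.rep.ι
         naturality := fun _ _ g =>
           (transition_comp_ι hC hm (leOfHom g)).trans (Category.comp_id _).symm }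

theorem isColimit_cocone (hC : IsLFP C) (hm : PreservesNonemptyMonos H)
    (hX : IsLFGCoalgebra H X) [IsFiltered (FGSubcoalgebraIndex X)] :
    Nonempty (IsColimit (cocone X hC hm)) := by
  obtain ⟨hc⟩ := hC.isColimit_of_mono_ι ((Coalgebra.forget H).mapCocone (cocone X hC hm))
    (fun a => a.rep.mono_ι_s9) fun G hG g => by
      obtain ⟨S, w, rfl⟩ := FGSubcoalgebra.exists_comp_ι_eq hC hm hX hG g
      obtain ⟨φ, hφ⟩ := exists_comp_ι_eq_of hC S
      exact ⟨of S, w ≫ φ, (Category.assoc _ _ _).trans (congrArg (w ≫ ·) hφ)⟩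
  exact ⟨isColimitOfIsColimitMapCoconeForget _ hc⟩

end FGSubcoalgebraIndex

end Coalgebra

end LFF

open LFF in
theorem stmt9_general {C : Type u} [Category.{v} C] (hC : IsLFP C)
    (H : C ⥤ C) (hm : PreservesNonemptyMonos H)
    (X : Endofunctor.Coalgebra H) (hX : IsLFGCoalgebra H X) :
    ∃ (J : Type v) (_ : SmallCategory J) (_ : IsFiltered J)
      (D : J ⥤ Endofunctor.Coalgebra H) (c : Cocone D),
      (∀ j, IsFG (D.obj j).V) ∧
      (∀ ⦃i j : J⦄ (f : i ⟶ j), Mono (D.map f).f) ∧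
      (∀ j, Mono (c.ι.app j).f) ∧
      c.pt = X ∧ Nonempty (IsColimit c) := by
  have := hC.2.1
  have := FGSubcoalgebraIndex.nonempty hC hm hX
  have := FGSubcoalgebraIndex.isDirected hC hm (X := X)
  exact ⟨FGSubcoalgebraIndex X, inferInstance, inferInstance,
    FGSubcoalgebraIndex.diagram X hC hm, FGSubcoalgebraIndex.cocone X hC hm,
    fun a => a.rep.isFG, fun _ _ g => FGSubcoalgebraIndex.mono_diagram_map hC hm g,
    fun a => a.rep.mono_ι_s9, rfl, FGSubcoalgebraIndex.isColimit_cocone hC hm hX⟩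

open LFF in
/-- Every lfg coalgebra is a directed colimit of its subcoalgebras with finitely
generated carrier: there is a filtered diagram of fg-carried coalgebras with
mono-carried connecting morphisms and mono-carried colimit injections whose colimit
is the given coalgebra. -/
theorem stmt9 {C : Type u} [Category.{v} C] (hC : IsLFP C)
    (H : C ⥤ C) (hfin : IsFinitary H) (hm : PreservesNonemptyMonos H)
    (X : Endofunctor.Coalgebra H) (hX : IsLFGCoalgebra H X) :
    ∃ (J : Type v) (_ : SmallCategory J) (_ : IsFiltered J)
      (D : J ⥤ Endofunctor.Coalgebra H) (c : Cocone D),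
      (∀ j, IsFG (D.obj j).V) ∧
      (∀ ⦃i j : J⦄ (f : i ⟶ j), Mono (D.map f).f) ∧
      (∀ j, Mono (c.ι.app j).f) ∧
      c.pt = X ∧ Nonempty (IsColimit c) :=
  stmt9_general hC H hm X hX
end
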